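/- Let s ≥ 0 and ε > 0. Then there exists a constant C > 0 (depending only on s and ε) such that for all sequences a, b : ℤ → ℂ, the commutator sequence C₀(k) := Σ_{k'∈ℤ} (⟨k⟩^s − ⟨k'⟩^s) · (i k') · a(k−k') · b(k') satisfies ‖C₀‖_{ℓ²} ≤ C ( ‖a‖_{ℓ²_{3/2+ε}} ‖b‖_{ℓ²_s} + ‖a‖_{ℓ²_s} ‖b‖_{ℓ²_{3/2+ε}} ). (This is the Fourier-coefficient form of the Kato–Ponce-type commutator estimate ‖[⟨D⟩^s, f]∂ₓg‖_{L²(𝕋)} ≲ ‖f‖_{H^{3/2+ε}}‖g‖_{H^s} + ‖f‖_{H^s}‖g‖_{H^{3/2+ε}}.) -/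

import Mathlib

open scoped ENNReal

/-- Japanese bracket `⟨k⟩ = (1 + k²)^(1/2)` for an integer `k`. -/
noncomputable def jb (k : ℤ) : ℝ := Real.sqrt (1 + (k : ℝ) ^ 2)

/-- Weighted `ℓ²_s` norm of a sequence `a : ℤ → ℂ`, valued in `[0,∞]`. -/
noncomputable def l2 (s : ℝ) (a : ℤ → ℂ) : ℝ≥0∞ :=
  (∑' k : ℤ, ENNReal.ofReal (jb k ^ (2 * s) * ‖a k‖ ^ 2)) ^ (1 / 2 : ℝ)

open MeasureTheory in
section

lemma jb_pos (k : ℤ) : 0 < jb k := Real.sqrt_pos.mpr (by positivity)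

lemma one_le_jb (k : ℤ) : 1 ≤ jb k := by
  rw [show (1:ℝ) = Real.sqrt 1 by simp [Real.sqrt_one]]
  exact Real.sqrt_le_sqrt (by nlinarith [sq_nonneg ((k:ℝ))])

lemma jb_sq (k : ℤ) : jb k ^ 2 = 1 + (k:ℝ) ^ 2 := Real.sq_sqrt (by positivity)

lemma abs_le_jb (k : ℤ) : |(k:ℝ)| ≤ jb k := by
  rw [show |(k:ℝ)| = Real.sqrt ((k:ℝ)^2) by rw [Real.sqrt_sq_eq_abs]]
  exact Real.sqrt_le_sqrt (by nlinarith)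

lemma jb_lip (k k' : ℤ) : jb k ≤ jb k' + |(k:ℝ) - (k':ℝ)| := by
  have h1 : 0 ≤ jb k' + |(k:ℝ) - (k':ℝ)| := add_nonneg (jb_pos k').le (abs_nonneg _)
  have h2 : 1 + (k:ℝ)^2 ≤ (jb k' + |(k:ℝ) - (k':ℝ)|)^2 := by
    have hsq := jb_sq k'
    have habs := abs_le_jb k'
    have h3 : |(k':ℝ)| * |(k:ℝ) - (k':ℝ)| ≤ jb k' * |(k:ℝ) - (k':ℝ)| :=
      mul_le_mul_of_nonneg_right habs (abs_nonneg _)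
    have h4 : (k':ℝ) * ((k:ℝ) - (k':ℝ)) ≤ |(k':ℝ)| * |(k:ℝ) - (k':ℝ)| := by
      rw [← abs_mul]; exact le_abs_self _
    nlinarith [sq_abs ((k:ℝ) - (k':ℝ)), abs_nonneg ((k:ℝ) - (k':ℝ))]
  calc jb k = Real.sqrt (1 + (k:ℝ)^2) := rfl
    _ ≤ Real.sqrt ((jb k' + |(k:ℝ) - (k':ℝ)|)^2) := Real.sqrt_le_sqrt h2
    _ = jb k' + |(k:ℝ) - (k':ℝ)| := Real.sqrt_sq h1

lemma abs_sub_le_jb_sub (k k' : ℤ) : |(k:ℝ) - (k':ℝ)| ≤ jb (k - k') := by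
  have := abs_le_jb (k - k')
  push_cast at this
  convert this using 2

lemma rpow_sub_le (x y s : ℝ) (hy : 0 ≤ y) (hxy : y ≤ x) (hs : 0 ≤ s) (hs1 : s ≤ 1) :
    x ^ s - y ^ s ≤ (x - y) ^ s := by
  have hd : 0 ≤ x - y := sub_nonneg.mpr hxy
  have h := NNReal.rpow_add_le_add_rpow (x - y).toNNReal y.toNNReal hs hs1
  rw [← Real.toNNReal_add hd hy, sub_add_cancel] at h
  have h' := NNReal.coe_le_coe.mpr h
  simp only [NNReal.coe_rpow, NNReal.coe_add, Real.coe_toNNReal _ (hy.trans hxy),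
    Real.coe_toNNReal _ hd, Real.coe_toNNReal _ hy] at h'
  linarith

lemma rpow_sub_le' (x y s : ℝ) (hx : 0 < x) (hy : 0 ≤ y) (hxy : y ≤ x) (hs : 1 ≤ s) :
    x ^ s - y ^ s ≤ s * x ^ (s - 1) * (x - y) := by
  set t : ℝ := (y - x) / x with ht
  have ht1 : -1 ≤ t := by
    rw [ht, le_div_iff₀ hx]; linarith
  have hB := one_add_mul_self_le_rpow_one_add ht1 hs
  have h1t : 1 + t = y / x := by rw [ht, one_add_div hx.ne', add_sub_cancel]
  rw [h1t, Real.div_rpow hy hx.le] at hB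
  have hxs : (0:ℝ) < x ^ s := Real.rpow_pos_of_pos hx s
  have h2 : (1 + s * t) * x ^ s ≤ y ^ s := by
    rw [← le_div_iff₀ hxs]; exact hB
  have hx1 : x ^ (s - 1) * x = x ^ s := by
    rw [Real.rpow_sub_one hx.ne' s]; field_simp
  have htx : t * x ^ s = (y - x) * x ^ (s - 1) := by
    rw [ht, ← hx1]; field_simp
  nlinarith [h2]

lemma key_ineq (s : ℝ) (hs : 0 ≤ s) (k k' : ℤ) :
    |jb k ^ s - jb k' ^ s| * |(k':ℝ)| ≤
      (1 + s * 2 ^ s) * (jb (k - k') ^ s * jb k' + jb (k - k') * jb k' ^ s) := by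
  set x := jb k
  set y := jb k'
  set d := jb (k - k')
  have hx : (1:ℝ) ≤ x := one_le_jb k
  have hy : (1:ℝ) ≤ y := one_le_jb k'
  have hd : (1:ℝ) ≤ d := one_le_jb (k - k')
  have hx0 : (0:ℝ) ≤ x := by linarith
  have hy0 : (0:ℝ) ≤ y := by linarith
  have hd0 : (0:ℝ) ≤ d := by linarith
  have hxd : x ≤ y + d := (jb_lip k k').trans (by linarith [abs_sub_le_jb_sub k k'])
  have hyd : y ≤ x + d := by
    have h1 := jb_lip k' k
    have h2 : |(k':ℝ) - (k:ℝ)| ≤ d := by rw [abs_sub_comm]; exact abs_sub_le_jb_sub k k'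
    linarith
  have hky : |(k':ℝ)| ≤ y := abs_le_jb k'
  have habs : |x - y| ≤ d := by rw [abs_le]; constructor <;> linarith
  have hds0 : (0:ℝ) ≤ d ^ s := Real.rpow_nonneg hd0 s
  have hys0 : (0:ℝ) ≤ y ^ s := Real.rpow_nonneg hy0 s
  have hRHSpos : 0 ≤ d ^ s * y + d * y ^ s := by nlinarith
  have hconst : (1:ℝ) ≤ 1 + s * 2 ^ s := by
    have : (0:ℝ) ≤ s * 2 ^ s := mul_nonneg hs (Real.rpow_nonneg (by norm_num) s)
    linarith
  rcases le_total s 1 with hs1 | hs1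
  · have hsub : |x ^ s - y ^ s| ≤ d ^ s := by
      have hds : |x - y| ^ s ≤ d ^ s := Real.rpow_le_rpow (abs_nonneg _) habs hs
      rcases le_total y x with h | h
      · rw [abs_of_nonneg (sub_nonneg.mpr (Real.rpow_le_rpow hy0 h hs))]
        have h1 := rpow_sub_le x y s hy0 h hs hs1
        have h2 : (x - y) ^ s = |x - y| ^ s := by rw [abs_of_nonneg (by linarith)]
        linarith
      · rw [abs_of_nonpos (sub_nonpos.mpr (Real.rpow_le_rpow hx0 h hs))]
        have h1 := rpow_sub_le y x s hx0 h hs hs1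
        have h2 : (y - x) ^ s = |x - y| ^ s := by rw [abs_sub_comm, abs_of_nonneg (by linarith)]
        linarith
    calc |x ^ s - y ^ s| * |(k':ℝ)| ≤ d ^ s * y :=
          mul_le_mul hsub hky (abs_nonneg _) hds0
      _ ≤ (1 + s * 2 ^ s) * (d ^ s * y + d * y ^ s) := by nlinarith
  · have hdy : (0:ℝ) < d + y := by linarith
    have hdys0 : (0:ℝ) ≤ (d + y) ^ (s - 1) := Real.rpow_nonneg hdy.le _
    have hmain : |x ^ s - y ^ s| ≤ s * (d + y) ^ (s - 1) * d := by
      rcases le_total y x with hyx | hxy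
      · rw [abs_of_nonneg (sub_nonneg.mpr (Real.rpow_le_rpow hy0 hyx hs))]
        have h1 := rpow_sub_le' x y s (by linarith) hy0 hyx hs1
        have h2 : x ^ (s - 1) ≤ (d + y) ^ (s - 1) :=
          Real.rpow_le_rpow hx0 (by linarith) (by linarith)
        have m1 : x ^ (s-1) * (x - y) ≤ (d + y) ^ (s-1) * d :=
          mul_le_mul h2 (by linarith) (by linarith) hdys0
        have m2 : s * (x ^ (s-1) * (x - y)) ≤ s * ((d + y) ^ (s-1) * d) :=
          mul_le_mul_of_nonneg_left m1 hs
        calc x ^ s - y ^ s ≤ s * x ^ (s-1) * (x - y) := h1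
          _ = s * (x ^ (s-1) * (x - y)) := by ring
          _ ≤ s * ((d + y) ^ (s-1) * d) := m2
          _ = s * (d + y) ^ (s-1) * d := by ring
      · rw [abs_of_nonpos (sub_nonpos.mpr (Real.rpow_le_rpow hx0 hxy hs)), neg_sub]
        have h1 := rpow_sub_le' y x s (by linarith) hx0 hxy hs1
        have h2 : y ^ (s - 1) ≤ (d + y) ^ (s - 1) :=
          Real.rpow_le_rpow hy0 (by linarith) (by linarith)
        have m1 : y ^ (s-1) * (y - x) ≤ (d + y) ^ (s-1) * d :=
          mul_le_mul h2 (by linarith) (by linarith) hdys0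
        have m2 : s * (y ^ (s-1) * (y - x)) ≤ s * ((d + y) ^ (s-1) * d) :=
          mul_le_mul_of_nonneg_left m1 hs
        calc y ^ s - x ^ s ≤ s * y ^ (s-1) * (y - x) := h1
          _ = s * (y ^ (s-1) * (y - x)) := by ring
          _ ≤ s * ((d + y) ^ (s-1) * d) := m2
          _ = s * (d + y) ^ (s-1) * d := by ring
    have hsplit : (d + y) ^ (s - 1) ≤ 2 ^ (s-1) * (d ^ (s-1) + y ^ (s-1)) := by
      have hds1 : (0:ℝ) ≤ d ^ (s-1) := Real.rpow_nonneg hd0 _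
      have hys1 : (0:ℝ) ≤ y ^ (s-1) := Real.rpow_nonneg hy0 _
      have h2pos : (0:ℝ) ≤ (2:ℝ) ^ (s-1) := Real.rpow_nonneg (by norm_num) _
      rcases le_total d y with hdy2 | hyd2
      · have h := Real.rpow_le_rpow (z := s - 1) (by linarith) (by linarith : d + y ≤ 2 * y) (by linarith)
        rw [Real.mul_rpow (by norm_num) hy0] at h
        nlinarith
      · have h := Real.rpow_le_rpow (z := s - 1) (by linarith) (by linarith : d + y ≤ 2 * d) (by linarith)
        rw [Real.mul_rpow (by norm_num) hd0] at h
        nlinarith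
    have hds : d ^ (s-1) * d = d ^ s := by
      rw [← Real.rpow_add_one (by linarith : d ≠ 0) (s-1)]; ring_nf
    have hys : y ^ (s-1) * y = y ^ s := by
      rw [← Real.rpow_add_one (by linarith : y ≠ 0) (s-1)]; ring_nf
    have h21 : (2:ℝ) ^ (s-1) ≤ 2 ^ s :=
      Real.rpow_le_rpow_of_exponent_le (by norm_num) (by linarith)
    have hstep : s * (d + y) ^ (s-1) * d * y ≤ s * (2 ^ (s-1) * (d ^ (s-1) + y ^ (s-1))) * d * y := by
      have := mul_le_mul_of_nonneg_left hsplit hs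
      have h0 : (0:ℝ) ≤ d * y := by nlinarith
      nlinarith
    calc |x ^ s - y ^ s| * |(k':ℝ)| ≤ (s * (d + y) ^ (s-1) * d) * y := by
          apply mul_le_mul hmain hky (abs_nonneg _)
          exact mul_nonneg (mul_nonneg hs hdys0) hd0
      _ ≤ s * (2 ^ (s-1) * (d ^ (s-1) + y ^ (s-1))) * d * y := hstep
      _ = s * 2 ^ (s-1) * (d ^ s * y + d * y ^ s) := by rw [← hds, ← hys]; ring
      _ ≤ (1 + s * 2 ^ s) * (d ^ s * y + d * y ^ s) := by
          have h3 : s * 2 ^ (s-1) ≤ 1 + s * 2 ^ s := by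
            nlinarith [mul_le_mul_of_nonneg_left h21 hs]
          exact mul_le_mul_of_nonneg_right h3 hRHSpos

/-- Cauchy–Schwarz for `ℝ≥0∞`-valued sums. -/
lemma tsum_cs (f g : ℤ → ℝ≥0∞) :
    ∑' k, f k * g k ≤ (∑' k, f k ^ (2:ℝ)) ^ (1/2:ℝ) * (∑' k, g k ^ (2:ℝ)) ^ (1/2:ℝ) := by
  have hpq : Real.HolderConjugate 2 2 := Real.HolderConjugate.two_two
  have h := ENNReal.lintegral_mul_le_Lp_mul_Lq (Measure.count (α := ℤ)) hpq
    (measurable_of_countable f).aemeasurable (measurable_of_countable g).aemeasurable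
  simpa [lintegral_count, Pi.mul_apply] using h

/-- `(x^(1/2))^(2:ℝ) = x` etc. -/
lemma rpow_half_sq (x : ℝ≥0∞) : (x ^ (1/2:ℝ)) ^ (2:ℝ) = x := by
  rw [← ENNReal.rpow_mul]; norm_num

lemma rpow_sq_half (x : ℝ≥0∞) : (x ^ (2:ℝ)) ^ (1/2:ℝ) = x := by
  rw [← ENNReal.rpow_mul]; norm_num

/-- Young `ℓ² * ℓ¹ → ℓ²` for `ℝ≥0∞`-valued sequences on `ℤ`. -/
lemma young (F G : ℤ → ℝ≥0∞) :
    (∑' k, (∑' j, F (k - j) * G j) ^ (2:ℝ)) ^ (1/2:ℝ) ≤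
      (∑' k, F k ^ (2:ℝ)) ^ (1/2:ℝ) * ∑' j, G j := by
  have inner_sq : ∀ k : ℤ, (∑' j, F (k - j) * G j) ^ (2:ℝ) ≤
      (∑' j, F (k - j) ^ (2:ℝ) * G j) * ∑' j, G j := by
    intro k
    have h1 : ∑' j, F (k - j) * G j
        = ∑' j, (F (k - j) * G j ^ (1/2:ℝ)) * G j ^ (1/2:ℝ) := by
      congr 1; funext j
      rw [mul_assoc, ← ENNReal.rpow_add_of_nonneg _ _ (by norm_num) (by norm_num)]
      norm_num
    have h2 := tsum_cs (fun j => F (k - j) * G j ^ (1/2:ℝ)) (fun j => G j ^ (1/2:ℝ))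
    have h3 : ∀ j : ℤ, (F (k - j) * G j ^ (1/2:ℝ)) ^ (2:ℝ) = F (k - j) ^ (2:ℝ) * G j := by
      intro j
      rw [ENNReal.mul_rpow_of_nonneg _ _ (by norm_num), rpow_half_sq]
    have h4 : ∀ j : ℤ, (G j ^ (1/2:ℝ)) ^ (2:ℝ) = G j := fun j => rpow_half_sq _
    simp only [h3, h4] at h2
    rw [h1]
    calc (∑' j, (F (k - j) * G j ^ (1/2:ℝ)) * G j ^ (1/2:ℝ)) ^ (2:ℝ)
        ≤ ((∑' j, F (k - j) ^ (2:ℝ) * G j) ^ (1/2:ℝ) * (∑' j, G j) ^ (1/2:ℝ)) ^ (2:ℝ) :=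
          ENNReal.rpow_le_rpow h2 (by norm_num)
      _ = (∑' j, F (k - j) ^ (2:ℝ) * G j) * ∑' j, G j := by
          rw [ENNReal.mul_rpow_of_nonneg _ _ (by norm_num), rpow_half_sq, rpow_half_sq]
  have hsum : ∑' k, (∑' j, F (k - j) ^ (2:ℝ) * G j) * (∑' j, G j)
      ≤ ((∑' k, F k ^ (2:ℝ)) * (∑' j, G j)) * (∑' j, G j) := by
    rw [ENNReal.tsum_mul_right]
    refine mul_le_mul_left (le_of_eq ?_) _
    calc ∑' k, ∑' j, F (k - j) ^ (2:ℝ) * G j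
        = ∑' j, ∑' k, F (k - j) ^ (2:ℝ) * G j := ENNReal.tsum_comm
      _ = ∑' j, (∑' k, F (k - j) ^ (2:ℝ)) * G j := by
          congr 1; funext j; rw [ENNReal.tsum_mul_right]
      _ = ∑' j, (∑' k, F k ^ (2:ℝ)) * G j := by
          congr 1; funext j; congr 1
          exact (Equiv.subRight j).tsum_eq (fun m => F m ^ (2:ℝ))
      _ = (∑' k, F k ^ (2:ℝ)) * ∑' j, G j := ENNReal.tsum_mul_left
  calc (∑' k, (∑' j, F (k - j) * G j) ^ (2:ℝ)) ^ (1/2:ℝ)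
      ≤ (((∑' k, F k ^ (2:ℝ)) * (∑' j, G j)) * (∑' j, G j)) ^ (1/2:ℝ) := by
        apply ENNReal.rpow_le_rpow _ (by norm_num)
        exact le_trans (ENNReal.tsum_le_tsum inner_sq) hsum
    _ = (∑' k, F k ^ (2:ℝ)) ^ (1/2:ℝ) * ∑' j, G j := by
        rw [mul_assoc, ENNReal.mul_rpow_of_nonneg _ _ (by norm_num)]
        congr 1
        rw [show (∑' j, G j) * (∑' j, G j) = (∑' j, G j) ^ (2:ℝ) by
          rw [show (2:ℝ) = ((2:ℕ):ℝ) by norm_num, ENNReal.rpow_natCast]; ring]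
        exact rpow_sq_half _

/-- norm of a tsum vs tsum of norms, ℝ≥0∞ form. -/
lemma ofReal_norm_tsum_le (f : ℤ → ℂ) :
    ENNReal.ofReal ‖∑' i, f i‖ ≤ ∑' i, ENNReal.ofReal ‖f i‖ := by
  simp only [← coe_nnnorm, ENNReal.ofReal_coe_nnreal]
  by_cases h : Summable fun i => ‖f i‖₊
  · rw [← ENNReal.coe_tsum h]
    exact_mod_cast nnnorm_tsum_le h
  · have htop : ∑' i, (‖f i‖₊ : ℝ≥0∞) = ⊤ := by
      rw [ENNReal.tsum_coe_eq_top_iff_not_summable_coe]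
      intro hc
      exact h (by exact_mod_cast NNReal.summable_coe.mp hc)
    rw [htop]
    exact le_top

/-- l2 in rpow form. -/
lemma l2_eq (s : ℝ) (a : ℤ → ℂ) :
    l2 s a = (∑' k, (ENNReal.ofReal (jb k ^ s * ‖a k‖)) ^ (2:ℝ)) ^ (1/2:ℝ) := by
  unfold l2
  congr 1
  apply tsum_congr
  intro k
  rw [ENNReal.ofReal_rpow_of_nonneg
    (mul_nonneg (Real.rpow_nonneg (jb_pos k).le s) (norm_nonneg _)) (by norm_num : (0:ℝ) ≤ 2)]
  congr 1
  rw [Real.mul_rpow (Real.rpow_nonneg (jb_pos k).le s) (norm_nonneg _),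
    ← Real.rpow_mul (jb_pos k).le]
  rw [show ‖a k‖ ^ (2:ℝ) = ‖a k‖ ^ (2:ℕ) by
    rw [← Real.rpow_natCast ‖a k‖ 2]; norm_num]
  norm_num [mul_comm]

noncomputable def Tc (ε : ℝ) : ℝ≥0∞ :=
  (∑' k : ℤ, ENNReal.ofReal (jb k ^ (-(1 + 2*ε)))) ^ (1/2:ℝ)

lemma Tc_ne_top {ε : ℝ} (hε : 0 < ε) : Tc ε ≠ ⊤ := by
  apply ENNReal.rpow_ne_top_of_nonneg (by norm_num)
  have hb : (1:ℝ) < 1 + 2*ε := by linarith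
  have hptw : ∀ k : ℤ, ENNReal.ofReal (jb k ^ (-(1 + 2*ε)))
      ≤ ENNReal.ofReal (|(k:ℝ)| ^ (-(1 + 2*ε))) + (if k = 0 then 1 else 0) := by
    intro k
    by_cases hk : k = 0
    · subst hk
      simp only [if_pos rfl]
      have : jb 0 = 1 := by simp [jb, Real.sqrt_one]
      rw [this, Real.one_rpow]
      simp
    · simp only [if_neg hk, add_zero]
      apply ENNReal.ofReal_le_ofReal
      have hk1 : (1:ℝ) ≤ |(k:ℝ)| := by
        have : (1:ℤ) ≤ |k| := Int.one_le_abs (by exact_mod_cast hk)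
        calc (1:ℝ) ≤ (|k| : ℤ) := by exact_mod_cast this
          _ = |(k:ℝ)| := by push_cast; rfl
      exact Real.rpow_le_rpow_of_nonpos (by linarith) (abs_le_jb k) (by linarith)
  have hsum : Summable (fun k : ℤ => |(k:ℝ)| ^ (-(1 + 2*ε))) :=
    Real.summable_abs_int_rpow hb
  have hlt : (∑' k : ℤ, ENNReal.ofReal (jb k ^ (-(1 + 2*ε)))) < ⊤ := calc
    ∑' k : ℤ, ENNReal.ofReal (jb k ^ (-(1 + 2*ε)))
      ≤ ∑' k : ℤ, (ENNReal.ofReal (|(k:ℝ)| ^ (-(1 + 2*ε))) + (if k = 0 then 1 else 0)) :=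
        ENNReal.tsum_le_tsum hptw
    _ = (∑' k : ℤ, ENNReal.ofReal (|(k:ℝ)| ^ (-(1 + 2*ε)))) + ∑' k : ℤ, (if k = 0 then (1:ℝ≥0∞) else 0) :=
        ENNReal.tsum_add
    _ < ⊤ := by
        apply ENNReal.add_lt_top.mpr
        constructor
        · rw [← ENNReal.ofReal_tsum_of_nonneg (fun k => Real.rpow_nonneg (abs_nonneg _) _) hsum]
          exact ENNReal.ofReal_lt_top
        · rw [tsum_ite_eq (0:ℤ) (fun _ => (1:ℝ≥0∞))]
          exact ENNReal.one_lt_top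
  exact hlt.ne

lemma l1_le {ε : ℝ} (hε : 0 < ε) (a : ℤ → ℂ) :
    ∑' k : ℤ, ENNReal.ofReal (jb k * ‖a k‖) ≤ Tc ε * l2 (3/2 + ε) a := by
  have hsplit : ∀ k : ℤ, ENNReal.ofReal (jb k * ‖a k‖)
      = ENNReal.ofReal (jb k ^ (-(1/2 + ε))) * ENNReal.ofReal (jb k ^ (3/2 + ε) * ‖a k‖) := by
    intro k
    rw [← ENNReal.ofReal_mul (Real.rpow_nonneg (jb_pos k).le _)]
    congr 1
    have hj : jb k ^ (-(1/2 + ε)) * jb k ^ (3/2 + ε) = jb k := by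
      rw [← Real.rpow_add (jb_pos k), show (-(1/2+ε) + (3/2+ε)) = (1:ℝ) by ring, Real.rpow_one]
    rw [← mul_assoc, hj]
  calc ∑' k : ℤ, ENNReal.ofReal (jb k * ‖a k‖)
      = ∑' k : ℤ, ENNReal.ofReal (jb k ^ (-(1/2 + ε))) * ENNReal.ofReal (jb k ^ (3/2 + ε) * ‖a k‖) := by
        exact tsum_congr hsplit
    _ ≤ (∑' k : ℤ, (ENNReal.ofReal (jb k ^ (-(1/2 + ε)))) ^ (2:ℝ)) ^ (1/2:ℝ) *
        (∑' k : ℤ, (ENNReal.ofReal (jb k ^ (3/2 + ε) * ‖a k‖)) ^ (2:ℝ)) ^ (1/2:ℝ) := tsum_cs _ _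
    _ = Tc ε * l2 (3/2 + ε) a := by
        rw [l2_eq]
        congr 2
        apply tsum_congr
        intro k
        rw [ENNReal.ofReal_rpow_of_nonneg (Real.rpow_nonneg (jb_pos k).le _) (by norm_num : (0:ℝ) ≤ 2),
          ← Real.rpow_mul (jb_pos k).le, show (-(1/2+ε)) * (2:ℝ) = -(1 + 2*ε) by ring]

lemma sq4 (x y : ℝ≥0∞) : (x + y) ^ (2:ℝ) ≤ 4 * x ^ (2:ℝ) + 4 * y ^ (2:ℝ) := by
  have h4 : ((2:ℝ≥0∞) ^ (2:ℝ)) = 4 := by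
    rw [show (2:ℝ) = ((2:ℕ):ℝ) by norm_num, ENNReal.rpow_natCast]; norm_num
  rcases le_total x y with h | h
  · have h1 : (x + y) ^ (2:ℝ) ≤ (2 * y) ^ (2:ℝ) :=
      ENNReal.rpow_le_rpow (by rw [two_mul]; exact add_le_add_left h y) (by norm_num)
    have h2 : (2 * y) ^ (2:ℝ) = 4 * y ^ (2:ℝ) := by
      rw [ENNReal.mul_rpow_of_nonneg _ _ (by norm_num : (0:ℝ) ≤ 2), h4]
    exact h1.trans (by rw [h2]; exact le_add_self)
  · have h1 : (x + y) ^ (2:ℝ) ≤ (2 * x) ^ (2:ℝ) :=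
      ENNReal.rpow_le_rpow (by rw [two_mul]; exact add_le_add_right h x) (by norm_num)
    have h2 : (2 * x) ^ (2:ℝ) = 4 * x ^ (2:ℝ) := by
      rw [ENNReal.mul_rpow_of_nonneg _ _ (by norm_num : (0:ℝ) ≤ 2), h4]
    exact h1.trans (by rw [h2]; exact le_self_add)

lemma conv_swap (P Q : ℤ → ℝ≥0∞) (k : ℤ) :
    ∑' j, P (k - j) * Q j = ∑' j, Q (k - j) * P j := by
  have h := (Equiv.subLeft k).tsum_eq (fun j => P (k - j) * Q j)
  simp only [Equiv.subLeft_apply, sub_sub_cancel] at h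
  rw [← h]
  exact tsum_congr fun j => mul_comm _ _


end

open MeasureTheory in
/-- Kato–Ponce-type commutator estimate (Fourier-coefficient form), `s ≥ 0`:
`‖[⟨D⟩^s, f]∂ₓg‖_{L²} ≲ ‖f‖_{H^{3/2+ε}}‖g‖_{H^s} + ‖f‖_{H^s}‖g‖_{H^{3/2+ε}}`. -/
theorem commutator_estimate (s ε : ℝ) (hs : 0 ≤ s) (hε : 0 < ε) :
    ∃ C : ℝ, 0 < C ∧ ∀ a b : ℤ → ℂ,
      l2 0 (fun k => ∑' k' : ℤ,
          Complex.ofReal (jb k ^ s - jb k' ^ s) * (Complex.I * (k' : ℂ)) * a (k - k') * b k')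
        ≤ ENNReal.ofReal C *
          (l2 (3 / 2 + ε) a * l2 s b + l2 s a * l2 (3 / 2 + ε) b) := by
  set Cs : ℝ := 1 + s * 2 ^ s with hCs
  have hCs0 : 0 ≤ Cs := by
    have : (0:ℝ) ≤ s * 2 ^ s := mul_nonneg hs (Real.rpow_nonneg (by norm_num) s)
    simp [hCs]; linarith
  set K : ℝ≥0∞ := ENNReal.ofReal Cs * 2 * Tc ε with hK
  have hKtop : K ≠ ⊤ := by
    apply ENNReal.mul_ne_top
    · exact ENNReal.mul_ne_top ENNReal.ofReal_ne_top (by norm_num)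
    · exact Tc_ne_top hε
  refine ⟨K.toReal + 1, by positivity, fun a b => ?_⟩
  have hKC : K ≤ ENNReal.ofReal (K.toReal + 1) := by
    conv_lhs => rw [← ENNReal.ofReal_toReal hKtop]
    exact ENNReal.ofReal_le_ofReal (by linarith)
  set As : ℤ → ℝ≥0∞ := fun k => ENNReal.ofReal (jb k ^ s * ‖a k‖) with hAs
  set Bs : ℤ → ℝ≥0∞ := fun k => ENNReal.ofReal (jb k ^ s * ‖b k‖) with hBs
  set A1 : ℤ → ℝ≥0∞ := fun k => ENNReal.ofReal (jb k * ‖a k‖) with hA1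
  set B1 : ℤ → ℝ≥0∞ := fun k => ENNReal.ofReal (jb k * ‖b k‖) with hB1
  set u : ℤ → ℝ≥0∞ := fun k => ∑' j, As (k - j) * B1 j with hu
  set v : ℤ → ℝ≥0∞ := fun k => ∑' j, Bs (k - j) * A1 j with hv
  set c : ℤ → ℂ := fun k => ∑' k' : ℤ,
      Complex.ofReal (jb k ^ s - jb k' ^ s) * (Complex.I * (k' : ℂ)) * a (k - k') * b k' with hc
  -- pointwise bound
  have hpt : ∀ k : ℤ, ENNReal.ofReal ‖c k‖ ≤ ENNReal.ofReal Cs * (u k + v k) := by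
    intro k
    have h1 : ENNReal.ofReal ‖c k‖ ≤ ∑' j : ℤ, ENNReal.ofReal
        ‖Complex.ofReal (jb k ^ s - jb j ^ s) * (Complex.I * (j : ℂ)) * a (k - j) * b j‖ :=
      ofReal_norm_tsum_le _
    have h2 : ∀ j : ℤ, ENNReal.ofReal
        ‖Complex.ofReal (jb k ^ s - jb j ^ s) * (Complex.I * (j : ℂ)) * a (k - j) * b j‖
        ≤ ENNReal.ofReal Cs * (As (k - j) * B1 j + A1 (k - j) * Bs j) := by
      intro j
      have hnorm : ‖Complex.ofReal (jb k ^ s - jb j ^ s) * (Complex.I * (j : ℂ)) * a (k - j) * b j‖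
          = (|jb k ^ s - jb j ^ s| * |(j:ℝ)|) * (‖a (k - j)‖ * ‖b j‖) := by
        simp [norm_mul, Complex.norm_real, Complex.norm_I]
        rw [← Complex.ofReal_sub, Complex.norm_real, Real.norm_eq_abs]
        ring
      have hab : (0:ℝ) ≤ ‖a (k - j)‖ * ‖b j‖ := by positivity
      have hreal : ‖Complex.ofReal (jb k ^ s - jb j ^ s) * (Complex.I * (j : ℂ)) * a (k - j) * b j‖
          ≤ Cs * ((jb (k - j) ^ s * ‖a (k - j)‖) * (jb j * ‖b j‖)
            + (jb (k - j) * ‖a (k - j)‖) * (jb j ^ s * ‖b j‖)) := by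
        rw [hnorm]
        have := mul_le_mul_of_nonneg_right (key_ineq s hs k j) hab
        calc (|jb k ^ s - jb j ^ s| * |(j:ℝ)|) * (‖a (k - j)‖ * ‖b j‖)
            ≤ (Cs * (jb (k - j) ^ s * jb j + jb (k - j) * jb j ^ s)) * (‖a (k - j)‖ * ‖b j‖) := this
          _ = Cs * ((jb (k - j) ^ s * ‖a (k - j)‖) * (jb j * ‖b j‖)
              + (jb (k - j) * ‖a (k - j)‖) * (jb j ^ s * ‖b j‖)) := by ring
      calc ENNReal.ofReal ‖Complex.ofReal (jb k ^ s - jb j ^ s) * (Complex.I * (j : ℂ)) * a (k - j) * b j‖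
          ≤ ENNReal.ofReal (Cs * ((jb (k - j) ^ s * ‖a (k - j)‖) * (jb j * ‖b j‖)
            + (jb (k - j) * ‖a (k - j)‖) * (jb j ^ s * ‖b j‖))) := ENNReal.ofReal_le_ofReal hreal
        _ = ENNReal.ofReal Cs * (As (k - j) * B1 j + A1 (k - j) * Bs j) := by
            rw [ENNReal.ofReal_mul hCs0]
            congr 1
            rw [ENNReal.ofReal_add
              (mul_nonneg (mul_nonneg (Real.rpow_nonneg (jb_pos _).le _) (norm_nonneg _))
                (mul_nonneg (jb_pos _).le (norm_nonneg _)))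
              (mul_nonneg (mul_nonneg (jb_pos _).le (norm_nonneg _))
                (mul_nonneg (Real.rpow_nonneg (jb_pos _).le _) (norm_nonneg _)))]
            congr 1
            · rw [hAs, hB1, ← ENNReal.ofReal_mul
                (mul_nonneg (Real.rpow_nonneg (jb_pos _).le _) (norm_nonneg _))]
            · rw [hA1, hBs, ← ENNReal.ofReal_mul
                (mul_nonneg (jb_pos _).le (norm_nonneg _))]
    calc ENNReal.ofReal ‖c k‖ ≤ ∑' j : ℤ, ENNReal.ofReal
          ‖Complex.ofReal (jb k ^ s - jb j ^ s) * (Complex.I * (j : ℂ)) * a (k - j) * b j‖ := h1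
      _ ≤ ∑' j : ℤ, ENNReal.ofReal Cs * (As (k - j) * B1 j + A1 (k - j) * Bs j) :=
          ENNReal.tsum_le_tsum h2
      _ = ENNReal.ofReal Cs * (u k + v k) := by
          rw [ENNReal.tsum_mul_left]
          congr 1
          rw [ENNReal.tsum_add]
          congr 1
          rw [hv]
          exact (tsum_congr fun j => rfl).trans (conv_swap A1 Bs k)
  -- assemble
  have hl20 : l2 0 c = (∑' k, (ENNReal.ofReal ‖c k‖) ^ (2:ℝ)) ^ (1/2:ℝ) := by
    rw [l2_eq 0 c]
    congr 1
    exact tsum_congr fun k => by rw [Real.rpow_zero, one_mul]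
  have hua : (∑' k, u k ^ (2:ℝ)) ^ (1/2:ℝ) ≤ l2 s a * (Tc ε * l2 (3/2 + ε) b) := by
    calc (∑' k, u k ^ (2:ℝ)) ^ (1/2:ℝ)
        ≤ (∑' k, As k ^ (2:ℝ)) ^ (1/2:ℝ) * ∑' j, B1 j := young As B1
      _ ≤ l2 s a * (Tc ε * l2 (3/2 + ε) b) := by
          rw [l2_eq s a]
          exact mul_le_mul_right (l1_le hε b) _
  have hvb : (∑' k, v k ^ (2:ℝ)) ^ (1/2:ℝ) ≤ l2 s b * (Tc ε * l2 (3/2 + ε) a) := by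
    calc (∑' k, v k ^ (2:ℝ)) ^ (1/2:ℝ)
        ≤ (∑' k, Bs k ^ (2:ℝ)) ^ (1/2:ℝ) * ∑' j, A1 j := young Bs A1
      _ ≤ l2 s b * (Tc ε * l2 (3/2 + ε) a) := by
          rw [l2_eq s b]
          exact mul_le_mul_right (l1_le hε a) _
  have main : l2 0 c ≤ K * (l2 (3/2 + ε) a * l2 s b + l2 s a * l2 (3/2 + ε) b) := by
    calc l2 0 c = (∑' k, (ENNReal.ofReal ‖c k‖) ^ (2:ℝ)) ^ (1/2:ℝ) := hl20
      _ ≤ (∑' k, (ENNReal.ofReal Cs * (u k + v k)) ^ (2:ℝ)) ^ (1/2:ℝ) := by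
          apply ENNReal.rpow_le_rpow _ (by norm_num)
          exact ENNReal.tsum_le_tsum fun k => ENNReal.rpow_le_rpow (hpt k) (by norm_num)
      _ = ENNReal.ofReal Cs * (∑' k, (u k + v k) ^ (2:ℝ)) ^ (1/2:ℝ) := by
          have : ∀ k, (ENNReal.ofReal Cs * (u k + v k)) ^ (2:ℝ)
              = (ENNReal.ofReal Cs) ^ (2:ℝ) * (u k + v k) ^ (2:ℝ) := fun k =>
            ENNReal.mul_rpow_of_nonneg _ _ (by norm_num)
          rw [tsum_congr this, ENNReal.tsum_mul_left,
            ENNReal.mul_rpow_of_nonneg _ _ (by norm_num), rpow_sq_half]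
      _ ≤ ENNReal.ofReal Cs * (∑' k, (4 * u k ^ (2:ℝ) + 4 * v k ^ (2:ℝ))) ^ (1/2:ℝ) := by
          apply mul_le_mul_right
          apply ENNReal.rpow_le_rpow _ (by norm_num)
          exact ENNReal.tsum_le_tsum fun k => sq4 (u k) (v k)
      _ ≤ ENNReal.ofReal Cs * ((4 * ∑' k, u k ^ (2:ℝ)) ^ (1/2:ℝ) + (4 * ∑' k, v k ^ (2:ℝ)) ^ (1/2:ℝ)) := by
          apply mul_le_mul_right
          rw [ENNReal.tsum_add, ENNReal.tsum_mul_left, ENNReal.tsum_mul_left]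
          exact ENNReal.rpow_add_le_add_rpow _ _ (by norm_num) (by norm_num)
      _ = ENNReal.ofReal Cs * 2 * ((∑' k, u k ^ (2:ℝ)) ^ (1/2:ℝ) + (∑' k, v k ^ (2:ℝ)) ^ (1/2:ℝ)) := by
          have h4 : ∀ x : ℝ≥0∞, (4 * x) ^ (1/2:ℝ) = 2 * x ^ (1/2:ℝ) := by
            intro x
            rw [ENNReal.mul_rpow_of_nonneg _ _ (by norm_num)]
            congr 1
            rw [show (4:ℝ≥0∞) = 2 ^ (2:ℝ) by
              rw [show (2:ℝ) = ((2:ℕ):ℝ) by norm_num, ENNReal.rpow_natCast]; norm_num,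
              ← ENNReal.rpow_mul]
            norm_num
          rw [h4, h4]; ring
      _ ≤ ENNReal.ofReal Cs * 2 * (l2 s a * (Tc ε * l2 (3/2 + ε) b) + l2 s b * (Tc ε * l2 (3/2 + ε) a)) := by
          exact mul_le_mul_right (add_le_add hua hvb) _
      _ = K * (l2 (3/2 + ε) a * l2 s b + l2 s a * l2 (3/2 + ε) b) := by
          rw [hK]; ring
  calc l2 0 c ≤ K * (l2 (3/2 + ε) a * l2 s b + l2 s a * l2 (3/2 + ε) b) := main
    _ ≤ ENNReal.ofReal (K.toReal + 1) * (l2 (3/2 + ε) a * l2 s b + l2 s a * l2 (3/2 + ε) b) :=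
        mul_le_mul_left hKC _
    _ = ENNReal.ofReal (K.toReal + 1) * (l2 (3 / 2 + ε) a * l2 s b + l2 s a * l2 (3 / 2 + ε) b) := rfl
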